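/- Let F(z) = |z|² + Φ(z), where Φ : ℂ^{n+1} → ℝ is smooth with identically vanishing complex Hessian (Φ_{h k̄} = 0 for all h, k), and let M = {z : F(z) = 0}. Then at every point z ∈ M with ∂F(z) ≠ 0, M is Levi umbilical with Levi curvature H(z) = 1/|∂F(z)|; that is, h(X,Y) + h(JX,JY) = (2/|∂F|) ⟨X,Y⟩ for all X, Y in the horizontal space H_z. -/

import Mathlib

/-!
The unit normal `ν` is the normalization of `G = (F_h̄)_h = z + (Φ_h̄)_h`. On tangent vectors
the derivative of the normalizing factor drops out, so `h(X, Y) = |∂F|⁻¹ ⟨X, dG(Y)⟩`. Since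
`Φ_{hk̄} = 0`, each `dΦ_k̄` is complex antilinear, so the contributions of `dΦ_h̄` to `h(X, Y)`
and `h(JX, JY)` cancel, while the identity part of `dG` contributes
`⟨X, Y⟩ + ⟨JX, JY⟩ = 2 ⟨X, Y⟩`.
-/

noncomputable section
open scoped BigOperators

/-- `ℂ^{n+1}`, identified with `ℝ^{2n+2}` via its real structure. -/
abbrev E (n : ℕ) : Type := EuclideanSpace ℂ (Fin (n + 1))

/-- The standard complex structure: multiplication by `i`. -/
def J {n : ℕ} (v : E n) : E n := Complex.I • v

/-- The real inner product `⟨x, y⟩ = Re ⟪x, y⟫`. -/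
def rI {n : ℕ} (x y : E n) : ℝ := (inner ℂ x y : ℂ).re

/-- The (real) tangent space at `p` of a hypersurface with unit normal `ν`. -/
def tangAt {n : ℕ} (ν : E n → E n) (p : E n) : Set (E n) := {X | rI (ν p) X = 0}

/-- `M` is a smooth embedded real hypersurface of `ℂ^{n+1}` (locally a regular zero
set of a smooth real function), oriented by the smooth unit normal field `ν`
(extended smoothly to the ambient space). -/
def IsHypersurface {n : ℕ} (M : Set (E n)) (ν : E n → E n) : Prop :=
  ContDiff ℝ (⊤ : ℕ∞) ν ∧ (∀ p ∈ M, ‖ν p‖ = 1) ∧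
    ∀ p ∈ M, ∃ (V : Set (E n)) (F : E n → ℝ), IsOpen V ∧ p ∈ V ∧
      ContDiffOn ℝ (⊤ : ℕ∞) F V ∧ (M ∩ V = {z ∈ V | F z = 0}) ∧
      ∀ z ∈ M ∩ V, ∀ X : E n, (fderiv ℝ F z X = 0 ↔ X ∈ tangAt ν z)

/-- The horizontal (maximal complex) subspace `H_p = {X ∈ T_pM : JX ∈ T_pM}`. -/
def horizAt {n : ℕ} (ν : E n → E n) (p : E n) : Set (E n) :=
  {X | X ∈ tangAt ν p ∧ J X ∈ tangAt ν p}

/-- The second fundamental form `h(X,Y) = ⟨X, ∂_Y ν⟩`. -/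
def sff {n : ℕ} (ν : E n → E n) (p : E n) (X Y : E n) : ℝ :=
  rI X (fderiv ℝ ν p Y)

/-- The family `X_1, …, X_n, J X_1, …, J X_n`. -/
def combined {n : ℕ} (X : Fin n → E n) : (Fin n ⊕ Fin n) → E n :=
  Sum.elim X (fun α => J (X α))

/-- `{X_1, …, X_n, J X_1, …, J X_n}` is an orthonormal basis of the horizontal
space at `p` (w.r.t. the real inner product). -/
def IsHorizONB {n : ℕ} (ν : E n → E n) (p : E n) (X : Fin n → E n) : Prop :=
  (∀ α, X α ∈ horizAt ν p) ∧
  (∀ i j, rI (combined X i) (combined X j) = if i = j then 1 else 0) ∧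
  (∀ Y ∈ horizAt ν p, Y ∈ Submodule.span ℝ (Set.range (combined X)))

/-- The `h`-th standard basis vector of `ℂ^{n+1}`. -/
def bvec {n : ℕ} (h : Fin (n + 1)) : E n := EuclideanSpace.single h 1

/-- The Wirtinger derivative `∂f/∂z_h = ½(∂f/∂x_h - i ∂f/∂y_h)`. -/
def wz {n : ℕ} (f : E n → ℂ) (z : E n) (h : Fin (n + 1)) : ℂ :=
  (fderiv ℝ f z (bvec h) - Complex.I * fderiv ℝ f z (Complex.I • bvec h)) / 2

/-- The Wirtinger derivative `∂f/∂z̄_h = ½(∂f/∂x_h + i ∂f/∂y_h)`. -/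
def wzb {n : ℕ} (f : E n → ℂ) (z : E n) (h : Fin (n + 1)) : ℂ :=
  (fderiv ℝ f z (bvec h) + Complex.I * fderiv ℝ f z (Complex.I • bvec h)) / 2

/-- `F_h = ∂F/∂z_h` for a real-valued `F`. -/
def Fz {n : ℕ} (F : E n → ℝ) (z : E n) (h : Fin (n + 1)) : ℂ :=
  wz (fun w => (F w : ℂ)) z h

/-- `F_{h k̄} = ∂²F/∂z_h ∂z̄_k`. -/
def Fzzb {n : ℕ} (F : E n → ℝ) (z : E n) (h k : Fin (n + 1)) : ℂ :=
  wz (fun w => wzb (fun w' => (F w' : ℂ)) w k) z h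

/-- `|∂F| = (Σ_h F_h F_h̄)^{1/2}`. -/
def pdF {n : ℕ} (F : E n → ℝ) (z : E n) : ℝ :=
  Real.sqrt (∑ h, Complex.normSq (Fz F z h))

/-- The unit normal `ν = ∇F/|∇F|`, whose complex coordinate vector is
`(F_h̄ / |∂F|)_h`. -/
def nuF {n : ℕ} (F : E n → ℝ) (z : E n) : E n :=
  (WithLp.equiv 2 _).symm fun h => (starRingEnd ℂ) (Fz F z h) / (pdF F z : ℂ)

/-- The defining function `F(z) = |z|² + Φ(z)`. -/
def F17 {n : ℕ} (Φ : E n → ℝ) : E n → ℝ := fun z => ‖z‖ ^ 2 + Φ z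

section Normalize

variable {W V : Type*} [NormedAddCommGroup W] [NormedSpace ℝ W]
  [NormedAddCommGroup V] [InnerProductSpace ℝ V]

lemma inner_fderiv_normalize {G : W → V} {z : W} {X : V} (hG : DifferentiableAt ℝ G z)
    (hz : G z ≠ 0) (hX : inner ℝ X (G z) = 0) (Y : W) :
    inner ℝ X (fderiv ℝ (fun w => ‖G w‖⁻¹ • G w) z Y) =
      ‖G z‖⁻¹ * inner ℝ X (fderiv ℝ G z Y) := by
  have hc : DifferentiableAt ℝ (fun w => ‖G w‖⁻¹) z := (hG.norm ℝ hz).inv (norm_ne_zero_iff.2 hz)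
  rw [fderiv_fun_smul hc hG]
  simp [inner_add_right, inner_smul_right, hX]

end Normalize

namespace LeviUmbilical

open Complex ComplexConjugate

variable {n : ℕ}

/-- Half the real gradient `∇F`. -/
def delbar (F : E n → ℝ) (w : E n) : E n := WithLp.toLp 2 fun h => conj (Fz F w h)

lemma fderiv_ofReal_comp (F : E n → ℝ) (w : E n) :
    fderiv ℝ (fun w => (F w : ℂ)) w = ofRealCLM.comp (fderiv ℝ F w) := by
  by_cases hF : DifferentiableAt ℝ F w
  · exact (ofRealCLM.hasFDerivAt.comp w hF.hasFDerivAt).fderiv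
  · have : ¬ DifferentiableAt ℝ (fun w => (F w : ℂ)) w := fun h => by
      have := reCLM.differentiableAt.comp w h
      simp only [Function.comp_def, reCLM_apply, ofReal_re] at this
      exact hF this
    rw [fderiv_zero_of_not_differentiableAt hF, fderiv_zero_of_not_differentiableAt this,
      ContinuousLinearMap.comp_zero]

lemma Fz_eq (F : E n → ℝ) (w : E n) (h : Fin (n + 1)) :
    Fz F w h = ((fderiv ℝ F w (bvec h) : ℂ) - I * (fderiv ℝ F w (I • bvec h) : ℂ)) / 2 := by
  simp [Fz, wz, fderiv_ofReal_comp]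

lemma delbar_apply (F : E n → ℝ) (w : E n) (h : Fin (n + 1)) :
    delbar F w h = wzb (fun w => (F w : ℂ)) w h := by
  simp [delbar, Fz_eq, wzb, fderiv_ofReal_comp, map_div₀, map_ofNat]

lemma delbar_add {F G : E n → ℝ} {w : E n} (hF : DifferentiableAt ℝ F w)
    (hG : DifferentiableAt ℝ G w) :
    delbar (fun w => F w + G w) w = delbar F w + delbar G w := by
  ext h
  simp only [delbar, Fz_eq, fderiv_fun_add hF hG, add_apply, ofReal_add, map_div₀, map_sub,
    map_add, conj_ofReal, map_mul, conj_I, PiLp.add_apply]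
  ring

lemma inner_bvec (w : E n) (h : Fin (n + 1)) : inner ℝ w (bvec h) = (w h).re := by
  simp [bvec, PiLp.inner_apply, apply_ite Complex.re]

lemma inner_I_smul_bvec (w : E n) (h : Fin (n + 1)) : inner ℝ w (I • bvec h) = (w h).im := by
  simp [bvec, PiLp.inner_apply, apply_ite Complex.re, mul_ite]

lemma delbar_norm_sq (w : E n) : delbar (fun w => ‖w‖ ^ 2) w = w := by
  ext h
  rw [delbar_apply, wzb, fderiv_ofReal_comp, (hasStrictFDerivAt_norm_sq w).hasFDerivAt.fderiv]
  simp only [ContinuousLinearMap.comp_apply, smul_apply, innerSL_apply_apply,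
    inner_bvec, inner_I_smul_bvec, ofRealCLM_apply]
  push_cast
  linear_combination re_add_im (w h)

lemma delbar_F17 {Φ : E n → ℝ} (hΦ : Differentiable ℝ Φ) :
    delbar (F17 Φ) = fun w => w + delbar Φ w :=
  funext fun w => by
    change delbar (fun w => ‖w‖ ^ 2 + Φ w) w = _
    rw [delbar_add (hasStrictFDerivAt_norm_sq w).differentiableAt (hΦ w), delbar_norm_sq]

lemma pdF_eq_norm (F : E n → ℝ) (w : E n) : pdF F w = ‖delbar F w‖ := by
  simp [pdF, EuclideanSpace.norm_eq, delbar, Complex.normSq_eq_norm_sq]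

lemma nuF_eq (F : E n → ℝ) : nuF F = fun w => ‖delbar F w‖⁻¹ • delbar F w := by
  funext w
  ext h
  simp [nuF, delbar, pdF_eq_norm, div_eq_inv_mul]

lemma map_I_smul_of_wirtinger (L : E n →L[ℝ] ℂ) (hL : ∀ h, L (bvec h) = I * L (I • bvec h))
    (Y : E n) : L (I • Y) = -I * L Y := by
  let b := basisOneI.smulTower (EuclideanSpace.basisFun (Fin (n + 1)) ℂ).toBasis
  have hb : ∀ i, L (I • b i) = -I * L (b i) := by
    rintro ⟨j, h⟩
    have hLh : L (EuclideanSpace.single h 1) = I * L (I • EuclideanSpace.single h 1) := hL h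
    simp only [b, Module.Basis.smulTower_apply, coe_basisOneI, OrthonormalBasis.coe_toBasis,
      EuclideanSpace.basisFun_apply]
    fin_cases j
    · simp only [Fin.zero_eta, Matrix.cons_val_zero, one_smul]
      linear_combination I * hLh + L (I • EuclideanSpace.single h 1) * I_sq
    · simp only [Fin.mk_one, Matrix.cons_val_one, Matrix.cons_val_fin_one, smul_smul, I_mul_I,
        neg_one_smul, map_neg]
      linear_combination -hLh
  rw [← b.sum_repr Y, Finset.smul_sum, map_sum, map_sum, Finset.mul_sum]
  refine Finset.sum_congr rfl fun i _ => ?_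
  rw [smul_comm, L.map_smul, L.map_smul, hb, real_smul, real_smul]
  ring

lemma fderiv_I_smul_of_wz_eq_zero {f : E n → ℂ} {z : E n} (hf : ∀ h, wz f z h = 0) (Y : E n) :
    fderiv ℝ f z (I • Y) = -I * fderiv ℝ f z Y :=
  map_I_smul_of_wirtinger _ (fun h => by
    have := hf h
    unfold wz at this
    linear_combination 2 * this) Y

lemma rI_eq_inner (x y : E n) : rI x y = inner ℝ x y := by
  simp [rI, PiLp.inner_apply]

lemma sff_nuF {F : E n → ℝ} {z X : E n} (hX : X ∈ tangAt (nuF F) z)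
    (hF : DifferentiableAt ℝ (delbar F) z) (hz : pdF F z ≠ 0) (Y : E n) :
    sff (nuF F) z X Y = (pdF F z)⁻¹ * rI X (fderiv ℝ (delbar F) z Y) := by
  rw [pdF_eq_norm] at hz ⊢
  have hX' : inner ℝ X (delbar F z) = 0 := by
    simpa [tangAt, rI_eq_inner, nuF_eq, real_inner_smul_left, real_inner_smul_right,
      real_inner_comm, hz] using hX
  rw [sff, nuF_eq, rI_eq_inner, rI_eq_inner]
  exact inner_fderiv_normalize hF (norm_ne_zero_iff.1 hz) hX' Y

lemma differentiable_delbar {Φ : E n → ℝ} (hΦ : ContDiff ℝ 2 Φ) :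
    Differentiable ℝ (delbar Φ) := by
  have hD : Differentiable ℝ (fderiv ℝ Φ) :=
    (hΦ.fderiv_right (m := 1) (by norm_num)).differentiable (by norm_num)
  refine (differentiable_piLp 2).2 fun h => ?_
  simp only [delbar_apply, wzb, fderiv_ofReal_comp]
  fun_prop

lemma fderiv_delbar_J {Φ : E n → ℝ} {z : E n} (hΦ : ∀ h k, Fzzb Φ z h k = 0)
    (hd : DifferentiableAt ℝ (delbar Φ) z) (Y : E n) :
    fderiv ℝ (delbar Φ) z (J Y) = -J (fderiv ℝ (delbar Φ) z Y) := by
  have hcoord : ∀ k V, fderiv ℝ (delbar Φ) z V k = fderiv ℝ (fun w => delbar Φ w k) z V :=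
    fun k V => by
      let πk := PiLp.proj (𝕜 := ℝ) 2 (fun _ : Fin (n + 1) => ℂ) k
      rw [show (fun w => delbar Φ w k) = πk ∘ delbar Φ from rfl,
        (πk.hasFDerivAt.comp z hd.hasFDerivAt).fderiv]
      rfl
  ext k
  simp only [J, PiLp.neg_apply, PiLp.smul_apply, smul_eq_mul, hcoord, delbar_apply]
  rw [fderiv_I_smul_of_wz_eq_zero (fun h => hΦ h k)]
  ring

lemma rI_J_J (x y : E n) : rI (J x) (J y) = rI x y := by
  simp [rI, J, ← mul_assoc]

lemma rI_add_rI_J_of_antilinear (L : E n →L[ℝ] E n) (hL : ∀ Y, L (J Y) = -J (L Y))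
    (X Y : E n) : rI X (Y + L Y) + rI (J X) (J Y + L (J Y)) = 2 * rI X Y := by
  simp only [rI, hL, inner_add_right, inner_neg_right, add_re, neg_re]
  rw [← rI, ← rI, ← rI, ← rI, rI_J_J, rI_J_J]
  ring

end LeviUmbilical

open LeviUmbilical

theorem stmt17_general {n : ℕ} (Φ : E n → ℝ) (hΦ : ContDiff ℝ (⊤ : ℕ∞) Φ)
    (hpoly : ∀ (z : E n) (h k : Fin (n + 1)), Fzzb Φ z h k = 0)
    (z : E n) (hreg : pdF (F17 Φ) z ≠ 0) :
    ∀ X ∈ horizAt (nuF (F17 Φ)) z, ∀ Y ∈ horizAt (nuF (F17 Φ)) z,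
      sff (nuF (F17 Φ)) z X Y + sff (nuF (F17 Φ)) z (J X) (J Y)
        = (2 / pdF (F17 Φ) z) * rI X Y := by
  intro X hX Y _
  have hΨ : Differentiable ℝ (delbar Φ) :=
    differentiable_delbar (hΦ.of_le (WithTop.coe_le_coe.2 le_top))
  have hGd : HasFDerivAt (delbar (F17 Φ))
      (ContinuousLinearMap.id ℝ (E n) + fderiv ℝ (delbar Φ) z) z := by
    rw [delbar_F17 (hΦ.differentiable (by simp))]
    exact (hasFDerivAt_id z).add (hΨ z).hasFDerivAt
  rw [sff_nuF hX.1 hGd.differentiableAt hreg, sff_nuF hX.2 hGd.differentiableAt hreg,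
    hGd.fderiv]
  simp only [add_apply, ContinuousLinearMap.id_apply]
  rw [← mul_add, rI_add_rI_J_of_antilinear _ (fderiv_delbar_J (hpoly z) (hΨ z))]
  field_simp

theorem stmt17 {n : ℕ} (Φ : E n → ℝ) (hΦ : ContDiff ℝ (⊤ : ℕ∞) Φ)
    (hpoly : ∀ (z : E n) (h k : Fin (n + 1)), Fzzb Φ z h k = 0)
    (z : E n) (hz : F17 Φ z = 0) (hreg : pdF (F17 Φ) z ≠ 0) :
    ∀ X ∈ horizAt (nuF (F17 Φ)) z, ∀ Y ∈ horizAt (nuF (F17 Φ)) z,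
      sff (nuF (F17 Φ)) z X Y + sff (nuF (F17 Φ)) z (J X) (J Y)
        = (2 / pdF (F17 Φ) z) * rI X Y :=
  stmt17_general Φ hΦ hpoly z hreg
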